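/- (Lemma 6.3) For the bootstrap island model, let boldQ_{n}(x, dy) = boldG_{n-1}(x) boldM_n(x, dy) with boldG_{n-1}(x) = N1^{-1} Σ_i G_{n-1}(x^i), and for p ≤ n let boldQ_{p,n} = boldQ_{p+1} ⋯ boldQ_n and the normalized kernel boldQ̄_{p,n} = boldQ_{p,n} / (boldη_p boldQ_{p,n}(1)). Then for every bounded measurable f on X_n and the lifted function F(x) = N1^{-1} Σ_{i=1}^{N1} f(x^i): (i) boldQ_n F (x) = N1^{-1} Σ_i (Q_n f)(x^i); (ii) for all p ≤ n, boldQ_{p,n} F (x) = N1^{-1} Σ_i (Q_{p,n} f)(x^i); (iii) for all p ≤ n, boldQ̄_{p,n} F (x) = N1^{-1} Σ_i (Q̄_{p,n} f)(x^i), where Q̄_{p,n} = Q_{p,n} / (η_p Q_{p,n}(1)). -/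

import Mathlib

open MeasureTheory ProbabilityTheory Filter Finset
open scoped ENNReal NNReal Topology Classical

noncomputable section

namespace FKisland

/-- Unnormalized Feynman-Kac measures `γ_n`:
`γ_0 = init` and `γ_{n+1}(f) = γ_n (G_n ⋅ step_{n+1} f)`. -/
def gammaSeq {S : ℕ → Type*} [∀ n, MeasurableSpace (S n)]
    (init : Measure (S 0)) (step : ∀ n, S n → Measure (S (n + 1)))
    (G : ∀ n, S n → ℝ) : (n : ℕ) → Measure (S n)
  | 0 => init
  | n + 1 => ((gammaSeq init step G n).withDensity
      (fun x => ENNReal.ofReal (G n x))).bind (step n)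

/-- Normalized Feynman-Kac measures `η_n = γ_n / γ_n(1)`. -/
def etaSeq {S : ℕ → Type*} [∀ n, MeasurableSpace (S n)]
    (init : Measure (S 0)) (step : ∀ n, S n → Measure (S (n + 1)))
    (G : ∀ n, S n → ℝ) (n : ℕ) : Measure (S n) :=
  (gammaSeq init step G n Set.univ)⁻¹ • gammaSeq init step G n

/-- Feynman-Kac semigroup `Q_{p,p+k} = Q_{p+1} Q_{p+2} ⋯ Q_{p+k}` acting on functions,
where `Q_{l+1} g (x) = G_l(x) ∫ g(y) step_l(x,dy)`. -/
def Qop {S : ℕ → Type*} [∀ n, MeasurableSpace (S n)]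
    (step : ∀ n, S n → Measure (S (n + 1))) (G : ∀ n, S n → ℝ) :
    (p k : ℕ) → (S (p + k) → ℝ) → S p → ℝ
  | _, 0, f => f
  | p, k + 1, f => Qop step G p k (fun x => G (p + k) x * ∫ y, f y ∂(step (p + k) x))

/-- `Q_{p,n}` for `p ≤ n`. -/
def Qle {S : ℕ → Type*} [∀ n, MeasurableSpace (S n)]
    (step : ∀ n, S n → Measure (S (n + 1))) (G : ∀ n, S n → ℝ)
    {p n : ℕ} (h : p ≤ n) (f : S n → ℝ) : S p → ℝ :=
  Qop step G p (n - p) (fun y => f (cast (congrArg S (Nat.add_sub_cancel' h)) y))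

/-- Normalized semigroup `Q̄_{p,p+k} = Q_{p,p+k} / η_p(Q_{p,p+k} 1)`. -/
def Qbar {S : ℕ → Type*} [∀ n, MeasurableSpace (S n)]
    (init : Measure (S 0)) (step : ∀ n, S n → Measure (S (n + 1)))
    (G : ∀ n, S n → ℝ) (p k : ℕ) (f : S (p + k) → ℝ) : S p → ℝ :=
  fun x => Qop step G p k f x /
    ∫ z, Qop step G p k (fun _ => (1 : ℝ)) z ∂(etaSeq init step G p)

/-- Normalized semigroup `Q̄_{p,n}` for `p ≤ n`. -/
def Qbarle {S : ℕ → Type*} [∀ n, MeasurableSpace (S n)]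
    (init : Measure (S 0)) (step : ∀ n, S n → Measure (S (n + 1)))
    (G : ∀ n, S n → ℝ) {p n : ℕ} (h : p ≤ n) (f : S n → ℝ) : S p → ℝ :=
  fun x => Qle step G h f x /
    ∫ z, Qle step G h (fun _ => (1 : ℝ)) z ∂(etaSeq init step G p)

/-- Boltzmann-Gibbs transformation `Ψ(μ)(dx) = G(x) μ(dx) / μ(G)`. -/
def boltzmannGibbs {α : Type*} [MeasurableSpace α] (G : α → ℝ) (μ : Measure α) :
    Measure α :=
  (∫⁻ x, ENNReal.ofReal (G x) ∂μ)⁻¹ • μ.withDensity fun x => ENNReal.ofReal (G x)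

/-- One bootstrap selection/mutation step (`boldM_{n+1}`): each of the `N` new particles is
drawn independently from the mixture `Σ_j G(x^j) M(x^j, ⋅) / Σ_k G(x^k)`. -/
def bootStep {α β : Type*} [MeasurableSpace α] [MeasurableSpace β]
    (M : α → Measure β) (G : α → ℝ) {N : ℕ} (x : Fin N → α) :
    Measure (Fin N → β) :=
  Measure.pi fun _ : Fin N =>
    (∑ k, ENNReal.ofReal (G (x k)))⁻¹ • ∑ j, ENNReal.ofReal (G (x j)) • M (x j)

/-- ε-bootstrap selection kernel
`S_{n,μ}(x, ⋅) = ε G(x) δ_x + (1 - ε G(x)) Ψ(μ)`. -/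
def epsSelect {α : Type*} [MeasurableSpace α]
    (G : α → ℝ) (ε : ℝ) (μ : Measure α) (x : α) : Measure α :=
  ENNReal.ofReal (ε * G x) • Measure.dirac x
    + ENNReal.ofReal (1 - ε * G x) • boltzmannGibbs G μ

/-- Empirical measure of a configuration. -/
def empMeasure {α : Type*} [MeasurableSpace α] {N : ℕ} (x : Fin N → α) : Measure α :=
  (N : ℝ≥0∞)⁻¹ • ∑ i, Measure.dirac (x i)

/-- One ε-bootstrap particle step: coordinate `i` moves with `S_{n, m(x)} M` started at `x^i`. -/
def epsBootStep {α β : Type*} [MeasurableSpace α] [MeasurableSpace β]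
    (M : α → Measure β) (G : α → ℝ) (ε : ℝ) {N : ℕ} (x : Fin N → α) :
    Measure (Fin N → β) :=
  Measure.pi fun i : Fin N => (epsSelect G ε (empMeasure x) (x i)).bind M

/-- One ESS particle step on weighted configurations: if the effective sample size
`(Σ w G)² / Σ (wG)²` is at least `a N`, keep the particles (mutating them) and multiply the
weights by the potential; otherwise resample multinomially and reset all weights to 1. -/
def essStep {α β : Type*} [MeasurableSpace α] [MeasurableSpace β]
    (M : α → Measure β) (G : α → ℝ) (a : ℝ) {N : ℕ} (xw : Fin N → α × ℝ) :
    Measure (Fin N → β × ℝ) :=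
  if (∑ i, (xw i).2 * G (xw i).1) ^ 2 / (∑ i, ((xw i).2 * G (xw i).1) ^ 2) ≥ a * N then
    Measure.pi fun i : Fin N => (M (xw i).1).map fun y => (y, (xw i).2 * G (xw i).1)
  else
    Measure.pi fun _ : Fin N =>
      ((∑ k, ENNReal.ofReal ((xw k).2 * G (xw k).1))⁻¹ •
          ∑ j, ENNReal.ofReal ((xw j).2 * G (xw j).1) • M (xw j).1).map
        fun y => (y, (1 : ℝ))

/-- The process `ξ` on the time-varying state spaces `S n` is a Markov chain with initial
law `init` and transition steps `step`, characterized through products of bounded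
measurable functionals of the path. -/
def IsMarkovApprox {Ω : Type*} [MeasurableSpace Ω] (P : Measure Ω)
    {S : ℕ → Type*} [∀ n, MeasurableSpace (S n)]
    (init : Measure (S 0)) (step : ∀ n, S n → Measure (S (n + 1)))
    (ξ : ∀ n, Ω → S n) : Prop :=
  (∀ n, Measurable (ξ n)) ∧
  P.map (ξ 0) = init ∧
  ∀ (n : ℕ) (F : ∀ p, S p → ℝ),
    (∀ p, Measurable (F p)) → (∀ p, ∃ C, ∀ x, |F p x| ≤ C) →
    ∀ (H : S (n + 1) → ℝ), Measurable H → (∃ C, ∀ x, |H x| ≤ C) →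
      ∫ ω, (∏ p ∈ Finset.range (n + 1), F p (ξ p ω)) * H (ξ (n + 1) ω) ∂P
        = ∫ ω, (∏ p ∈ Finset.range (n + 1), F p (ξ p ω)) *
            ∫ y, H y ∂(step n (ξ n ω)) ∂P

/-- Bootstrap local sampling errors `W_p^{N1}` along a configuration path `ξ`:
`W_0^{N1}(g) = √N1 (η_0^{N1}(g) - η_0(g))` and for `p ≥ 1`,
`W_p^{N1}(g) = √N1 (η_p^{N1}(g) - Φ_p(η_{p-1}^{N1})(g))` with `Φ_p(μ) = Ψ_{p-1}(μ) M_p`. -/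
def localW {X : ℕ → Type*} [∀ n, MeasurableSpace (X n)]
    (η0 : Measure (X 0)) (M : ∀ n, Kernel (X n) (X (n + 1))) (G : ∀ n, X n → ℝ)
    (N1 : ℕ) (ξ : ∀ p, Fin N1 → X p) : (p : ℕ) → (X p → ℝ) → ℝ
  | 0, g => Real.sqrt N1 * (((N1 : ℝ)⁻¹ * ∑ i, g (ξ 0 i)) - ∫ x, g x ∂η0)
  | p + 1, g => Real.sqrt N1 * (((N1 : ℝ)⁻¹ * ∑ i, g (ξ (p + 1) i))
      - (∑ i, G p (ξ p i) * ∫ y, g y ∂(M p (ξ p i))) / ∑ i, G p (ξ p i))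

end FKisland

open FKisland

/-!
Lifting `f` to `F x = N⁻¹ ∑ᵢ f xⁱ` intertwines the island model with the base model. A bootstrap
step draws the `N` new particles independently from the mixture `∑ⱼ G xʲ M(xʲ, ·) / ∑ₖ G xᵏ`, so
`boldM F x = ∑ⱼ G xʲ (M f) xʲ / ∑ₖ G xᵏ`, and multiplying by `boldG x = N⁻¹ ∑ₖ G xᵏ` cancels the
normalisation: `boldQ F` is the lift of `Q f`. Iterating gives (ii). Running the same identity
forward from `η₀^{⊗N}` shows that `boldγ_p` integrates lifts as `γ_p` does, so `boldη_p` integrates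
them as `η_p` does and the normalising constants in (iii) agree.
-/

theorem measurable_measure_pi {α ι : Type*} [MeasurableSpace α] [Fintype ι] {β : ι → Type*}
    [∀ i, MeasurableSpace (β i)] {μ : α → ∀ i, Measure (β i)} [∀ a i, IsFiniteMeasure (μ a i)]
    (hμ : ∀ i, Measurable fun a => μ a i) : Measurable fun a => Measure.pi (μ a) := by
  have hbox : ∀ s : ∀ i, Set (β i), (∀ i, MeasurableSet (s i)) →
      Measurable fun a => Measure.pi (μ a) (Set.univ.pi s) := fun s hs => by
    simp_rw [Measure.pi_pi]
    exact Finset.measurable_prod _ fun i _ => (Measure.measurable_coe (hs i)).comp (hμ i)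
  refine .measure_of_isPiSystem generateFrom_pi.symm isPiSystem_pi ?_ ?_
  · rintro _ ⟨s, hs, rfl⟩
    exact hbox s fun i => hs i (Set.mem_univ i)
  · simpa using hbox (fun _ => Set.univ) fun _ => MeasurableSet.univ

namespace FKisland

section BoundedMeasurable

variable {α β : Type*} [MeasurableSpace α] [MeasurableSpace β]

def BoundedMeasurable (f : α → ℝ) : Prop :=
  Measurable f ∧ ∃ C, ∀ x, |f x| ≤ C

theorem BoundedMeasurable.integrable {f : α → ℝ} (hf : BoundedMeasurable f) (μ : Measure α)
    [IsFiniteMeasure μ] : Integrable f μ :=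
  let ⟨hm, C, hC⟩ := hf
  .of_bound hm.aestronglyMeasurable C (.of_forall hC)

theorem BoundedMeasurable.exists_forall_le {f : α → ℝ} (hf : BoundedMeasurable f) :
    ∃ C, ∀ x, f x ≤ C :=
  let ⟨_, C, hC⟩ := hf
  ⟨C, fun x => (le_abs_self _).trans (hC x)⟩

theorem BoundedMeasurable.mul {f g : α → ℝ} (hf : BoundedMeasurable f)
    (hg : BoundedMeasurable g) : BoundedMeasurable (f * g) := by
  obtain ⟨hfm, C, hC⟩ := hf
  obtain ⟨hgm, D, hD⟩ := hg
  refine ⟨hfm.mul hgm, C * D, fun x => ?_⟩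
  rw [Pi.mul_apply, abs_mul]
  exact mul_le_mul (hC x) (hD x) (abs_nonneg _) ((abs_nonneg _).trans (hC x))

theorem BoundedMeasurable.integral_kernel {f : β → ℝ} (hf : BoundedMeasurable f)
    (κ : Kernel α β) [IsMarkovKernel κ] : BoundedMeasurable fun x => ∫ y, f y ∂κ x := by
  obtain ⟨hm, C, hC⟩ := hf
  refine ⟨hm.stronglyMeasurable.integral_kernel.measurable, C, fun x => ?_⟩
  simpa using norm_integral_le_of_norm_le_const (μ := κ x) (f := f) (.of_forall hC)

end BoundedMeasurable

section FeynmanKac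

variable {S : ℕ → Type*} [∀ n, MeasurableSpace (S n)]

def Qstep (step : ∀ n, S n → Measure (S (n + 1))) (G : ∀ n, S n → ℝ) (n : ℕ)
    (f : S (n + 1) → ℝ) (x : S n) : ℝ :=
  G n x * ∫ y, f y ∂step n x

theorem Qop_succ (step : ∀ n, S n → Measure (S (n + 1))) (G : ∀ n, S n → ℝ) (p k : ℕ)
    (f : S (p + k + 1) → ℝ) :
    Qop step G p (k + 1) f = Qop step G p k (Qstep step G (p + k) f) :=
  rfl

theorem integral_etaSeq (init : Measure (S 0)) (step : ∀ n, S n → Measure (S (n + 1)))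
    (G : ∀ n, S n → ℝ) (n : ℕ) (h : S n → ℝ) :
    ∫ x, h x ∂etaSeq init step G n
      = ((gammaSeq init step G n).real Set.univ)⁻¹ * ∫ x, h x ∂gammaSeq init step G n := by
  rw [etaSeq, integral_smul_measure, ENNReal.toReal_inv, smul_eq_mul, measureReal_def]

variable (κ : ∀ n, Kernel (S n) (S (n + 1))) {G : ∀ n, S n → ℝ}

theorem BoundedMeasurable.Qstep {n : ℕ} [IsMarkovKernel (κ n)] (hG : BoundedMeasurable (G n))
    {f : S (n + 1) → ℝ} (hf : BoundedMeasurable f) :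
    BoundedMeasurable (Qstep (fun n => κ n) G n f) :=
  hG.mul (hf.integral_kernel _)

theorem BoundedMeasurable.Qop [∀ n, IsMarkovKernel (κ n)] (hG : ∀ n, BoundedMeasurable (G n))
    (p k : ℕ) {f : S (p + k) → ℝ} (hf : BoundedMeasurable f) :
    BoundedMeasurable (Qop (fun n => κ n) G p k f) := by
  induction k with
  | zero => exact hf
  | succ k ih => exact ih (BoundedMeasurable.Qstep κ (hG _) hf)

theorem isFiniteMeasure_gammaSeq (init : Measure (S 0)) [IsFiniteMeasure init]
    [∀ n, IsFiniteKernel (κ n)] (hG : ∀ n, ∃ C, ∀ x, G n x ≤ C) (n : ℕ) :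
    IsFiniteMeasure (gammaSeq init (fun n => κ n) G n) := by
  induction n with
  | zero => assumption
  | succ n ih =>
    obtain ⟨C, hC⟩ := hG n
    have : IsFiniteMeasure ((gammaSeq init (fun n => κ n) G n).withDensity
        fun x => ENNReal.ofReal (G n x)) := by
      refine isFiniteMeasure_withDensity (ne_top_of_le_ne_top ?_
        (lintegral_mono fun x => ENNReal.ofReal_le_ofReal (hC x)))
      simp [lintegral_const, ENNReal.mul_ne_top, measure_ne_top]
    exact inferInstanceAs (IsFiniteMeasure (κ n ∘ₘ _))

theorem integral_gammaSeq_succ (init : Measure (S 0)) (n : ℕ) (hGm : Measurable (G n))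
    (hG0 : ∀ x, 0 ≤ G n x) {h : S (n + 1) → ℝ}
    (hh : Integrable h (gammaSeq init (fun n => κ n) G (n + 1))) :
    ∫ y, h y ∂gammaSeq init (fun n => κ n) G (n + 1)
      = ∫ x, Qstep (fun n => κ n) G n h x ∂gammaSeq init (fun n => κ n) G n := by
  have hcomp : gammaSeq init (fun n => κ n) G (n + 1)
      = (κ n ∘ₖ Kernel.const Unit ((gammaSeq init (fun n => κ n) G n).withDensity
          fun x => ENNReal.ofReal (G n x))) () := by
    rw [← Measure.comp_eq_comp_const_apply]; rfl
  rw [hcomp] at hh ⊢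
  rw [Kernel.integral_comp hh, Kernel.const_apply,
    integral_withDensity_eq_integral_toReal_smul hGm.ennreal_ofReal
      (.of_forall fun _ => ENNReal.ofReal_lt_top)]
  simp only [ENNReal.toReal_ofReal (hG0 _), smul_eq_mul, Qstep]

end FeynmanKac

section Island

variable {α β : Type*} {N : ℕ}

def liftMean (N : ℕ) (f : α → ℝ) (x : Fin N → α) : ℝ :=
  (N : ℝ)⁻¹ * ∑ i, f (x i)

theorem liftMean_const (hN : N ≠ 0) (c : ℝ) : liftMean N (fun _ : α => c) = fun _ => c := by
  ext x
  simp [liftMean, hN]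

theorem sum_comp_pos {f : α → ℝ} (hf : ∀ a, 0 < f a) (hN : N ≠ 0) (x : Fin N → α) :
    0 < ∑ i, f (x i) :=
  Finset.sum_pos (fun i _ => hf (x i)) (Finset.univ_nonempty_iff.2 ⟨⟨0, Nat.pos_of_ne_zero hN⟩⟩)

theorem liftMean_pos {f : α → ℝ} (hf : ∀ a, 0 < f a) (hN : N ≠ 0) (x : Fin N → α) :
    0 < liftMean N f x :=
  mul_pos (by positivity) (sum_comp_pos hf hN x)

variable [MeasurableSpace α] [MeasurableSpace β]

theorem BoundedMeasurable.liftMean {f : α → ℝ} (hf : BoundedMeasurable f) :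
    BoundedMeasurable (liftMean N f) := by
  obtain ⟨hm, C, hC⟩ := hf
  refine ⟨measurable_const.mul (Finset.measurable_sum _ fun i _ => hm.comp (measurable_pi_apply i)),
    (N : ℝ)⁻¹ * (N * C), fun x => ?_⟩
  rw [FKisland.liftMean, abs_mul, abs_of_nonneg (by positivity)]
  refine mul_le_mul_of_nonneg_left ?_ (by positivity)
  calc |∑ i, f (x i)| ≤ ∑ i, |f (x i)| := Finset.abs_sum_le_sum_abs _ _
    _ ≤ ∑ _i : Fin N, C := Finset.sum_le_sum fun i _ => hC (x i)
    _ = N * C := by simp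

theorem integral_liftMean_pi (ν : Measure α) [IsProbabilityMeasure ν] (hN : N ≠ 0) {f : α → ℝ}
    (hf : Integrable f ν) :
    ∫ x, liftMean N f x ∂Measure.pi (fun _ : Fin N => ν) = ∫ a, f a ∂ν := by
  simp only [liftMean]
  rw [integral_const_mul, integral_finsetSum _ fun i _ => integrable_comp_eval hf]
  have h := fun i : Fin N => integral_comp_eval (μ := fun _ : Fin N => ν) (i := i) hf.1
  simp [h, hN]

def selectionMutation (M : Kernel α β) (G : α → ℝ) (x : Fin N → α) : Measure β :=
  (∑ k, ENNReal.ofReal (G (x k)))⁻¹ • ∑ j, ENNReal.ofReal (G (x j)) • M (x j)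

variable (M : Kernel α β) {G : α → ℝ}

theorem measurable_selectionMutation (hG : Measurable G) :
    Measurable fun x : Fin N → α => selectionMutation M G x := by
  have hw : ∀ j : Fin N, Measurable fun x : Fin N → α => ENNReal.ofReal (G (x j)) :=
    fun j => (hG.comp (measurable_pi_apply j)).ennreal_ofReal
  refine Measure.measurable_of_measurable_coe _ fun s hs => ?_
  simp only [selectionMutation, Measure.smul_apply, Measure.coe_finsetSum, Finset.sum_apply,
    smul_eq_mul]
  exact (Finset.measurable_sum _ fun k _ => hw k).inv.mul (Finset.measurable_sum _ fun j _ =>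
    (hw j).mul ((M.measurable_coe hs).comp (measurable_pi_apply j)))

-- Also when all weights vanish: then the measure is `0⁻¹ • 0 = ⊤ • 0 = 0`.
instance [IsMarkovKernel M] (x : Fin N → α) : IsFiniteMeasure (selectionMutation M G x) := by
  constructor
  simpa [selectionMutation] using (ENNReal.inv_mul_le_one _).trans_lt ENNReal.one_lt_top

theorem isProbabilityMeasure_selectionMutation [IsMarkovKernel M] (hG : ∀ a, 0 < G a)
    (hN : N ≠ 0) (x : Fin N → α) : IsProbabilityMeasure (selectionMutation M G x) := by
  have hsum : ∑ k, ENNReal.ofReal (G (x k)) ≠ 0 := by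
    rw [← ENNReal.ofReal_sum_of_nonneg fun k _ => (hG (x k)).le]
    exact (ENNReal.ofReal_pos.2 (sum_comp_pos hG hN x)).ne'
  constructor
  simpa [selectionMutation] using
    ENNReal.inv_mul_cancel hsum (ENNReal.sum_ne_top.2 fun _ _ => ENNReal.ofReal_ne_top)

theorem integral_selectionMutation (hG : ∀ a, 0 ≤ G a) {f : β → ℝ}
    (hf : ∀ a, Integrable f (M a)) (x : Fin N → α) :
    ∫ y, f y ∂selectionMutation M G x = (∑ k, G (x k))⁻¹ * ∑ j, G (x j) * ∫ y, f y ∂M (x j) := by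
  rw [selectionMutation, integral_smul_measure, integral_finsetSum_measure fun j _ =>
    (hf _).smul_measure ENNReal.ofReal_ne_top]
  simp [integral_smul_measure, ENNReal.toReal_sum, ENNReal.toReal_ofReal (hG _)]

theorem bootStep_eq_pi (x : Fin N → α) :
    bootStep M G x = Measure.pi fun _ => selectionMutation M G x :=
  rfl

def bootKernel [IsMarkovKernel M] (hG : Measurable G) (N : ℕ) : Kernel (Fin N → α) (Fin N → β) where
  toFun x := bootStep M G x
  measurable' := measurable_measure_pi (μ := fun x _ => selectionMutation M G x) fun _ =>
    measurable_selectionMutation M hG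

theorem isMarkovKernel_bootKernel [IsMarkovKernel M] (hGm : Measurable G) (hG : ∀ a, 0 < G a)
    (hN : N ≠ 0) : IsMarkovKernel (bootKernel M hGm N) :=
  ⟨fun x => have := isProbabilityMeasure_selectionMutation M hG hN x
    inferInstanceAs (IsProbabilityMeasure (Measure.pi fun _ : Fin N => selectionMutation M G x))⟩

theorem liftMean_mul_integral_bootStep [IsMarkovKernel M] (hG : ∀ a, 0 < G a) (hN : N ≠ 0)
    {f : β → ℝ} (hf : BoundedMeasurable f) (x : Fin N → α) :
    liftMean N G x * ∫ y, liftMean N f y ∂bootStep M G x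
      = liftMean N (fun a => G a * ∫ y, f y ∂M a) x := by
  have := isProbabilityMeasure_selectionMutation M hG hN x
  have hsum := (sum_comp_pos hG hN x).ne'
  rw [bootStep_eq_pi, integral_liftMean_pi _ hN (hf.integrable _),
    integral_selectionMutation M (fun a => (hG a).le) (fun a => hf.integrable _)]
  simp only [liftMean]
  field_simp

end Island

section IslandModel

variable {X : ℕ → Type*} [∀ n, MeasurableSpace (X n)] (M : ∀ n, Kernel (X n) (X (n + 1)))
  [∀ n, IsMarkovKernel (M n)] {G : ∀ n, X n → ℝ} {N : ℕ}

theorem Qop_bootKernel_liftMean (hG : ∀ n, BoundedMeasurable (G n)) (hGpos : ∀ n x, 0 < G n x)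
    (hN : N ≠ 0) (p k : ℕ) {f : X (p + k) → ℝ} (hf : BoundedMeasurable f) :
    Qop (fun l => bootKernel (M l) (hG l).1 N) (fun l => liftMean N (G l)) p k (liftMean N f)
      = liftMean N (Qop (fun l => M l) G p k f) := by
  induction k with
  | zero => rfl
  | succ k ih =>
    have hstep : Qstep (fun l => bootKernel (M l) (hG l).1 N) (fun l => liftMean N (G l)) (p + k)
        (liftMean N f)
          = liftMean N (Qstep (fun l => M l) G (p + k) f) :=
      funext (liftMean_mul_integral_bootStep (M (p + k)) (hGpos _) hN hf)
    rw [Qop_succ, Qop_succ, hstep]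
    exact ih (BoundedMeasurable.Qstep M (hG _) hf)

theorem integral_liftMean_gammaSeq (η0 : Measure (X 0)) [IsProbabilityMeasure η0]
    (hG : ∀ n, BoundedMeasurable (G n)) (hGpos : ∀ n x, 0 < G n x) (hN : N ≠ 0) (n : ℕ)
    {g : X n → ℝ} (hg : BoundedMeasurable g) :
    ∫ x, liftMean N g x ∂gammaSeq (Measure.pi fun _ => η0)
        (fun l => bootKernel (M l) (hG l).1 N) (fun l => liftMean N (G l)) n
      = ∫ a, g a ∂gammaSeq η0 (fun l => M l) G n := by
  have := fun l => isMarkovKernel_bootKernel (M l) (hG l).1 (hGpos l) hN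
  induction n with
  | zero => exact integral_liftMean_pi η0 hN (hg.integrable η0)
  | succ n ih =>
    have := isFiniteMeasure_gammaSeq (fun l => bootKernel (M l) (hG l).1 N) (Measure.pi fun _ => η0)
      (fun l => (hG l).liftMean.exists_forall_le) (n + 1)
    have := isFiniteMeasure_gammaSeq M η0 (fun l => (hG l).exists_forall_le) (n + 1)
    rw [integral_gammaSeq_succ _ _ n (hG n).liftMean.1
        (fun x => (liftMean_pos (hGpos n) hN x).le) (hg.liftMean.integrable _),
      integral_gammaSeq_succ _ _ n (hG n).1 (fun x => (hGpos n x).le) (hg.integrable _)]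
    have hstep : Qstep (fun l => bootKernel (M l) (hG l).1 N) (fun l => liftMean N (G l)) n
        (liftMean N g) = liftMean N (Qstep (fun l => M l) G n g) :=
      funext (liftMean_mul_integral_bootStep (M n) (hGpos n) hN hg)
    rw [hstep]
    exact ih (BoundedMeasurable.Qstep M (hG n) hg)

theorem integral_liftMean_etaSeq (η0 : Measure (X 0)) [IsProbabilityMeasure η0]
    (hG : ∀ n, BoundedMeasurable (G n)) (hGpos : ∀ n x, 0 < G n x) (hN : N ≠ 0) (n : ℕ)
    {g : X n → ℝ} (hg : BoundedMeasurable g) :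
    ∫ x, liftMean N g x ∂etaSeq (Measure.pi fun _ => η0)
        (fun l => bootKernel (M l) (hG l).1 N) (fun l => liftMean N (G l)) n
      = ∫ a, g a ∂etaSeq η0 (fun l => M l) G n := by
  have hmass := integral_liftMean_gammaSeq M η0 hG hGpos hN n (g := fun _ => 1)
    ⟨measurable_const, 1, by simp⟩
  rw [liftMean_const hN] at hmass
  simp only [integral_const, smul_eq_mul, mul_one] at hmass
  rw [integral_etaSeq, integral_etaSeq, integral_liftMean_gammaSeq M η0 hG hGpos hN n hg, hmass]

theorem Qbar_bootKernel_liftMean (η0 : Measure (X 0)) [IsProbabilityMeasure η0]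
    (hG : ∀ n, BoundedMeasurable (G n)) (hGpos : ∀ n x, 0 < G n x) (hN : N ≠ 0) (p k : ℕ)
    {f : X (p + k) → ℝ} (hf : BoundedMeasurable f) :
    Qbar (Measure.pi fun _ => η0) (fun l => bootKernel (M l) (hG l).1 N)
        (fun l => liftMean N (G l)) p k (liftMean N f)
      = liftMean N (Qbar η0 (fun l => M l) G p k f) := by
  have hone : BoundedMeasurable fun _ : X (p + k) => (1 : ℝ) := ⟨measurable_const, 1, by simp⟩
  have hQone := Qop_bootKernel_liftMean M hG hGpos hN p k hone
  rw [liftMean_const hN] at hQone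
  ext x
  simp only [Qbar]
  rw [hQone, Qop_bootKernel_liftMean M hG hGpos hN p k hf,
    integral_liftMean_etaSeq M η0 hG hGpos hN p (BoundedMeasurable.Qop M hG p k hone)]
  simp only [liftMean, Qbar, mul_div_assoc, Finset.sum_div]

end IslandModel

end FKisland

/-- **Lemma 6.3.** For the bootstrap island model with transitions
`boldM`, potentials `boldG_n(x) = N1⁻¹ Σ_i G_n(x^i)` and initial law `η_0^{⊗N1}`, the
island semigroups act on lifted functions `F(x) = N1⁻¹ Σ_i f(x^i)` as follows:
(i) `boldQ_{p+1} F = N1⁻¹ Σ_i Q_{p+1} f (x^i)`;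
(ii) for all `p ≤ n` (`n = p + k`), `boldQ_{p,n} F (x) = N1⁻¹ Σ_i Q_{p,n} f (x^i)`;
(iii) for all `p ≤ n`, `boldQ̄_{p,n} F (x) = N1⁻¹ Σ_i Q̄_{p,n} f (x^i)`. -/
theorem statement11 {X : ℕ → Type*} [∀ n, MeasurableSpace (X n)]
    (η0 : Measure (X 0)) [IsProbabilityMeasure η0]
    (M : ∀ n, Kernel (X n) (X (n + 1))) [∀ n, IsMarkovKernel (M n)]
    (G : ∀ n, X n → ℝ)
    (hGmeas : ∀ n, Measurable (G n))
    (hGbdd : ∀ n, ∃ C, ∀ x, G n x ≤ C)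
    (hGpos : ∀ n x, 0 < G n x)
    {N1 : ℕ} (hN1 : 1 ≤ N1) :
    (∀ (p : ℕ) (f : X (p + 1) → ℝ), Measurable f → (∃ C, ∀ x, |f x| ≤ C) →
      ∀ x : Fin N1 → X p,
        Qop (S := fun q => Fin N1 → X q)
            (fun l y => bootStep (fun a => M l a) (G l) y)
            (fun l y => (N1 : ℝ)⁻¹ * ∑ i, G l (y i)) p 1
            (fun z => (N1 : ℝ)⁻¹ * ∑ i, f (z i)) x
          = (N1 : ℝ)⁻¹ * ∑ i, Qop (S := X) (fun l a => M l a) G p 1 f (x i))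
    ∧ (∀ (p k : ℕ) (f : X (p + k) → ℝ), Measurable f → (∃ C, ∀ x, |f x| ≤ C) →
      ∀ x : Fin N1 → X p,
        Qop (S := fun q => Fin N1 → X q)
            (fun l y => bootStep (fun a => M l a) (G l) y)
            (fun l y => (N1 : ℝ)⁻¹ * ∑ i, G l (y i)) p k
            (fun z => (N1 : ℝ)⁻¹ * ∑ i, f (z i)) x
          = (N1 : ℝ)⁻¹ * ∑ i, Qop (S := X) (fun l a => M l a) G p k f (x i))
    ∧ (∀ (p k : ℕ) (f : X (p + k) → ℝ), Measurable f → (∃ C, ∀ x, |f x| ≤ C) →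
      ∀ x : Fin N1 → X p,
        Qbar (S := fun q => Fin N1 → X q) (Measure.pi fun _ : Fin N1 => η0)
            (fun l y => bootStep (fun a => M l a) (G l) y)
            (fun l y => (N1 : ℝ)⁻¹ * ∑ i, G l (y i)) p k
            (fun z => (N1 : ℝ)⁻¹ * ∑ i, f (z i)) x
          = (N1 : ℝ)⁻¹ * ∑ i, Qbar (S := X) η0 (fun l a => M l a) G p k f (x i)) := by
  have hG : ∀ n, BoundedMeasurable (G n) := fun n =>
    let ⟨C, hC⟩ := hGbdd n
    ⟨hGmeas n, C, fun x => (abs_of_pos (hGpos n x)).trans_le (hC x)⟩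
  have hN : N1 ≠ 0 := Nat.one_le_iff_ne_zero.mp hN1
  exact ⟨fun p f hf hfb => congrFun (Qop_bootKernel_liftMean M hG hGpos hN p 1 ⟨hf, hfb⟩),
    fun p k f hf hfb => congrFun (Qop_bootKernel_liftMean M hG hGpos hN p k ⟨hf, hfb⟩),
    fun p k f hf hfb => congrFun (Qbar_bootKernel_liftMean M η0 hG hGpos hN p k ⟨hf, hfb⟩)⟩
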